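/- arXiv:1303.1224 — 4 statements merged into one kernel-verified Lean document; each statement's English description precedes it below -/
import Mathlib

section
/- (Attouch diagonalization) Let h : [0,∞)² → [−∞,+∞]. Then there exists a function ε ↦ δ(ε) with δ(ε) → 0 as ε → 0 such that limsup_{ε→0} h(ε, δ(ε)) ≤ limsup_{δ→0} limsup_{ε→0} h(ε, δ). In particular, if h ≥ 0 and lim_{δ→0} lim_{ε→0} h(ε,δ) = 0, then lim_{ε→0} h(ε, δ(ε)) = 0. -/
open Filter Topology Set

/-- Attouch's diagonalisation lemma: for `h : [0,∞)² → [−∞,+∞]` there is a map `ε ↦ δ(ε)`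
with `δ(ε) → 0` such that `limsup_{ε→0} h(ε, δ(ε)) ≤ limsup_{δ→0} limsup_{ε→0} h(ε, δ)`;
in particular, if `h ≥ 0` and `lim_{δ→0} lim_{ε→0} h(ε,δ) = 0`, then
`lim_{ε→0} h(ε, δ(ε)) = 0`. -/
theorem stmt7 (h : ℝ → ℝ → EReal) :
    ∃ δ : ℝ → ℝ,
      Filter.Tendsto δ (nhdsWithin 0 (Set.Ioi (0:ℝ))) (nhds 0) ∧
      Filter.limsup (fun ε => h ε (δ ε)) (nhdsWithin 0 (Set.Ioi (0:ℝ)))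
        ≤ Filter.limsup
            (fun d' => Filter.limsup (fun ε => h ε d') (nhdsWithin 0 (Set.Ioi (0:ℝ))))
            (nhdsWithin 0 (Set.Ioi (0:ℝ))) ∧
      ((∀ ε d', 0 ≤ h ε d') →
        (∃ L : ℝ → EReal,
          (∀ d', Filter.Tendsto (fun ε => h ε d')
            (nhdsWithin 0 (Set.Ioi (0:ℝ))) (nhds (L d'))) ∧
          Filter.Tendsto L (nhdsWithin 0 (Set.Ioi (0:ℝ))) (nhds (0:EReal))) →
        Filter.Tendsto (fun ε => h ε (δ ε))
          (nhdsWithin 0 (Set.Ioi (0:ℝ))) (nhds (0:EReal))) := by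
  classical
  set F : Filter ℝ := nhdsWithin 0 (Set.Ioi (0:ℝ)) with hF
  set g : ℝ → EReal := fun d => Filter.limsup (fun ε => h ε d) F with hg
  set M : EReal := Filter.limsup g F with hMdef
  -- under the hypotheses of the last bullet, `M = 0`
  have hM0 : ∀ (L : ℝ → EReal),
      (∀ d', Tendsto (fun ε => h ε d') F (nhds (L d'))) →
      Tendsto L F (nhds (0:EReal)) → M = 0 := by
    intro L hL hL0
    have hgL : g = L := funext fun d => (hL d).limsup_eq
    rw [hMdef, hgL]
    exact hL0.limsup_eq
  rcases eq_or_lt_of_le (le_top : M ≤ ⊤) with htop | hlt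
  · refine ⟨id, tendsto_id.mono_left nhdsWithin_le_nhds, ?_, ?_⟩
    · exact le_of_le_of_eq le_top htop.symm
    · rintro hpos ⟨L, hL, hL0⟩
      have := hM0 L hL hL0
      rw [this] at htop
      exact absurd htop.symm (by simp)
  -- main case: `M < ⊤`
  obtain ⟨a, ha_anti, ha_mem, ha_tend⟩ := exists_seq_strictAnti_tendsto' hlt
  -- extract radii `r n` on which `g < a n`
  have hgn : ∀ n, ∃ r > (0:ℝ), ∀ d ∈ Ioo (0:ℝ) r, g d < a n := by
    intro n
    have hev : ∀ᶠ d in F, g d < a n :=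
      Filter.eventually_lt_of_limsup_lt (by rw [← hMdef]; exact (ha_mem n).1)
    rw [hF, eventually_nhdsWithin_iff, Metric.eventually_nhds_iff] at hev
    obtain ⟨r, hr, H⟩ := hev
    refine ⟨r, hr, fun d hd => H ?_ hd.1⟩
    rw [Real.dist_eq, sub_zero, abs_of_pos hd.1]
    exact hd.2
  choose r hrpos hrprop using hgn
  -- choose the diagonal points `d n`
  set d : ℕ → ℝ := fun n => min (r n) (1/(n+1)) / 2 with hd
  have hd_pos : ∀ n, 0 < d n := fun n => by
    have : 0 < min (r n) (1/(n+1:ℝ)) := lt_min (hrpos n) (by positivity)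
    positivity
  have hd_lt_r : ∀ n, d n < r n := fun n => by
    have h1 : 0 < min (r n) (1/(n+1:ℝ)) := lt_min (hrpos n) (by positivity)
    calc d n < min (r n) (1/(n+1:ℝ)) := by rw [hd]; linarith
    _ ≤ r n := min_le_left _ _
  have hd_le : ∀ n, d n ≤ 1/(n+1:ℝ) := fun n => by
    have h1 : 0 < min (r n) (1/(n+1:ℝ)) := lt_min (hrpos n) (by positivity)
    calc d n ≤ min (r n) (1/(n+1:ℝ)) := by rw [hd]; linarith
    _ ≤ 1/(n+1:ℝ) := min_le_right _ _
  have hgd : ∀ n, g (d n) < a n := fun n =>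
    hrprop n (d n) ⟨hd_pos n, hd_lt_r n⟩
  -- extract radii `eN n` on which `h ε (d n) < a n`
  have hhn : ∀ n, ∃ e > (0:ℝ), ∀ ε ∈ Ioo (0:ℝ) e, h ε (d n) < a n := by
    intro n
    have hev : ∀ᶠ ε in F, h ε (d n) < a n :=
      Filter.eventually_lt_of_limsup_lt (hgd n)
    rw [hF, eventually_nhdsWithin_iff, Metric.eventually_nhds_iff] at hev
    obtain ⟨e, he, H⟩ := hev
    refine ⟨e, he, fun ε hε => H ?_ hε.1⟩
    rw [Real.dist_eq, sub_zero, abs_of_pos hε.1]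
    exact hε.2
  choose eN heNpos heNprop using hhn
  -- a strictly decreasing sequence `E n ≤ eN n` tending to `0`
  set E : ℕ → ℝ := fun n => Nat.rec (min (eN 0) 1) (fun k Ek => min (eN (k+1)) Ek / 2) n
    with hE
  have hE0 : E 0 = min (eN 0) 1 := rfl
  have hEsucc : ∀ n, E (n+1) = min (eN (n+1)) (E n) / 2 := fun n => rfl
  have hEpos : ∀ n, 0 < E n := by
    intro n
    induction n with
    | zero => rw [hE0]; exact lt_min (heNpos 0) one_pos
    | succ k ih =>
      rw [hEsucc]
      have : 0 < min (eN (k+1)) (E k) := lt_min (heNpos (k+1)) ih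
      linarith
  have hEle : ∀ n, E n ≤ eN n := by
    intro n
    cases n with
    | zero => rw [hE0]; exact min_le_left _ _
    | succ k =>
      rw [hEsucc]
      have h1 : 0 < min (eN (k+1)) (E k) := lt_min (heNpos (k+1)) (hEpos k)
      calc min (eN (k+1)) (E k) / 2 ≤ min (eN (k+1)) (E k) := by linarith
      _ ≤ eN (k+1) := min_le_left _ _
  have hEstep : ∀ n, E (n+1) ≤ E n / 2 := by
    intro n
    rw [hEsucc]
    have := min_le_right (eN (n+1)) (E n)
    linarith
  have hEanti : StrictAnti E := strictAnti_nat_of_succ_lt (fun n => by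
    have h1 := hEstep n
    have h2 := hEpos n
    linarith)
  have hEbound : ∀ n, E n ≤ (1/2:ℝ)^n := by
    intro n
    induction n with
    | zero => simp only [hE0]; exact min_le_right (eN 0) 1
    | succ k ih =>
      have h1 := hEstep k
      calc E (k+1) ≤ E k / 2 := h1
      _ ≤ (1/2:ℝ)^k / 2 := by linarith
      _ = (1/2:ℝ)^(k+1) := by ring
  -- the index function
  set N : ℝ → ℕ := fun ε => sInf {n | E (n+1) ≤ ε} with hN
  have hNex : ∀ ε : ℝ, 0 < ε → {n | E (n+1) ≤ ε}.Nonempty := by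
    intro ε hε
    obtain ⟨n, hn⟩ := exists_pow_lt_of_lt_one hε (by norm_num : (1/2:ℝ) < 1)
    refine ⟨n, ?_⟩
    calc E (n+1) ≤ (1/2:ℝ)^(n+1) := hEbound (n+1)
    _ ≤ (1/2:ℝ)^n := by
        have : (0:ℝ) < (1/2:ℝ)^n := by positivity
        calc (1/2:ℝ)^(n+1) = (1/2:ℝ)^n / 2 := by ring
        _ ≤ (1/2:ℝ)^n := by linarith
    _ ≤ ε := hn.le
  have hNmem : ∀ ε : ℝ, 0 < ε → E (N ε + 1) ≤ ε := fun ε hε => Nat.sInf_mem (hNex ε hε)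
  have hNlt : ∀ ε ∈ Ioo (0:ℝ) (E 0), ε < E (N ε) := by
    intro ε hε
    cases hNε : N ε with
    | zero => exact hε.2
    | succ m =>
      by_contra hcon
      push_neg at hcon
      have hmem : m ∈ {n | E (n+1) ≤ ε} := hcon
      have h4 : N ε ≤ m := Nat.sInf_le hmem
      omega
  have hNlarge : ∀ m : ℕ, ∀ ε ∈ Ioo (0:ℝ) (E (m+1)), m < N ε := by
    intro m ε hε
    by_contra hcon
    push_neg at hcon
    have h1 : E (N ε + 1) ≤ ε := hNmem ε hε.1
    have h2 : E (m+1) ≤ E (N ε + 1) := hEanti.antitone (show N ε + 1 ≤ m + 1 by omega)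
    have := hε.2
    linarith
  -- membership of small intervals in the filter
  have hIoo_mem : ∀ c : ℝ, 0 < c → Ioo (0:ℝ) c ∈ F :=
    fun c hc => Ioo_mem_nhdsGT_of_mem ⟨le_refl 0, hc⟩
  refine ⟨fun ε => d (N ε), ?_, ?_, ?_⟩
  -- δ → 0
  · have hNtend : Tendsto N F atTop := by
      rw [tendsto_atTop]
      intro m
      filter_upwards [hIoo_mem (E (m+1)) (hEpos (m+1))] with ε hε
      exact (hNlarge m ε hε).le
    have hdtend : Tendsto d atTop (𝓝 0) := by
      apply squeeze_zero (fun n => (hd_pos n).le) hd_le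
      exact tendsto_one_div_add_atTop_nhds_zero_nat
    exact hdtend.comp hNtend
  -- limsup bound
  · apply le_of_forall_gt_imp_ge_of_dense
    intro b hb
    obtain ⟨m, hm⟩ := (ha_tend.eventually (gt_mem_nhds hb)).exists
    refine Filter.limsup_le_of_le (by isBoundedDefault) ?_
    filter_upwards [hIoo_mem (E (m+1)) (hEpos (m+1))] with ε hε
    have hε0 : ε ∈ Ioo (0:ℝ) (E 0) :=
      ⟨hε.1, lt_of_lt_of_le hε.2 (hEanti.antitone (Nat.zero_le (m+1)))⟩
    have h1 : ε < eN (N ε) := lt_of_lt_of_le (hNlt ε hε0) (hEle (N ε))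
    have h2 : h ε (d (N ε)) < a (N ε) := heNprop (N ε) ε ⟨hε.1, h1⟩
    have h3 : a (N ε) ≤ a m := ha_anti.antitone (hNlarge m ε hε).le
    exact le_of_lt (lt_of_lt_of_le h2 (le_trans h3 hm.le))
  -- the "in particular" part
  · rintro hpos ⟨L, hL, hL0⟩
    have hMeq : M = 0 := hM0 L hL hL0
    -- limsup ≤ 0
    have hbound : Filter.limsup (fun ε => h ε (d (N ε))) F ≤ 0 := by
      rw [← hMeq]
      apply le_of_forall_gt_imp_ge_of_dense
      intro b hb
      obtain ⟨m, hm⟩ := (ha_tend.eventually (gt_mem_nhds hb)).exists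
      refine Filter.limsup_le_of_le (by isBoundedDefault) ?_
      filter_upwards [hIoo_mem (E (m+1)) (hEpos (m+1))] with ε hε
      have hε0 : ε ∈ Ioo (0:ℝ) (E 0) :=
        ⟨hε.1, lt_of_lt_of_le hε.2 (hEanti.antitone (Nat.zero_le (m+1)))⟩
      have h1 : ε < eN (N ε) := lt_of_lt_of_le (hNlt ε hε0) (hEle (N ε))
      have h2 : h ε (d (N ε)) < a (N ε) := heNprop (N ε) ε ⟨hε.1, h1⟩
      have h3 : a (N ε) ≤ a m := ha_anti.antitone (hNlarge m ε hε).le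
      exact le_of_lt (lt_of_lt_of_le h2 (le_trans h3 hm.le))
    have hlb : (0:EReal) ≤ Filter.liminf (fun ε => h ε (d (N ε))) F :=
      Filter.le_liminf_of_le (by isBoundedDefault)
        (Filter.Eventually.of_forall fun ε => hpos ε _)
    exact tendsto_of_le_liminf_of_limsup_le hlb hbound
end

section
/- Let W : ℝ^{d×d} → [0,∞) be continuous with W(I) = min W = 0 and admit a quadratic expansion W(I+G) = Q(G) + r(G), where Q is a nonnegative quadratic form and |r(G)| ≤ ρ(|G|)|G|² for an increasing function ρ : [0,∞) → [0,∞] with ρ(0+) = 0. Let Ω ⊂ ℝ^d be bounded and measurable, (c_ε) positive with c_ε → 0, and (F_ε) ⊂ L²(Ω;ℝ^{d×d}) with c_ε‖F_ε‖_{L^∞(Ω)} → 0 and F_ε → F strongly in L²(Ω). Then lim_{ε→0} c_ε^{−2} ∫_Ω W(I + c_ε F_ε) dx = ∫_Ω Q(F) dx. -/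
open MeasureTheory Filter Topology Bornology

/-- Frobenius norm of a real `d × d` matrix. -/
noncomputable def fro {d : ℕ} (A : Matrix (Fin d) (Fin d) ℝ) : ℝ :=
  Real.sqrt (∑ i, ∑ j, (A i j) ^ 2)

/-!
Because `Q` comes from a bounded bilinear form, `|Q G - Q H| ≤ C |G - H| (|G - H| + 2 |H|)`;
with Cauchy–Schwarz this makes `f ↦ ∫ Q(f)` continuous on `L²`, so `∫ Q(F_ε) → ∫ Q(F)`.
On the other hand `|c_ε F_ε| ≤ c_ε K_ε` a.e., so the expansion error at `c_ε F_ε` is at most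
`ρ(c_ε K_ε) c_ε² |F_ε|²`. After division by `c_ε²` the total error is `ρ(c_ε K_ε) ∫ |F_ε|²`,
which tends to zero since `ρ(c_ε K_ε) → 0` and `∫ |F_ε|²` converges.
-/

open scoped NNReal ENNReal

section
variable {α : Type*} {m : MeasurableSpace α} {μ : Measure α}

theorem integral_mul_le_sqrt_mul_sqrt {u v : α → ℝ} (hu0 : 0 ≤ᵐ[μ] u) (hv0 : 0 ≤ᵐ[μ] v)
    (hu : MemLp u 2 μ) (hv : MemLp v 2 μ) :
    ∫ x, u x * v x ∂μ ≤ √(∫ x, u x ^ 2 ∂μ) * √(∫ x, v x ^ 2 ∂μ) := by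
  have h := integral_mul_le_Lp_mul_Lq_of_nonneg Real.HolderConjugate.two_two hu0 hv0
    (by simpa using hu) (by simpa using hv)
  simpa only [Real.rpow_two, Real.sqrt_eq_rpow, one_div] using h

end

theorem Monotone.tendsto_nhds_zero_of_nhdsGT {ρ : ℝ → ℝ≥0∞} (hρ : Monotone ρ)
    (hρ0 : Tendsto ρ (𝓝[>] 0) (𝓝 0)) : Tendsto ρ (𝓝 0) (𝓝 0) := by
  have h0 : ρ 0 = 0 := le_antisymm (_root_.ge_of_tendsto hρ0
    (eventually_nhdsWithin_of_forall fun y hy => hρ (le_of_lt hy))) bot_le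
  rw [← nhdsLE_sup_nhdsGT, tendsto_sup]
  refine ⟨tendsto_const_nhds.congr' ?_, hρ0⟩
  filter_upwards [self_mem_nhdsWithin] with x hx
  exact (nonpos_iff_eq_zero.1 (h0 ▸ hρ hx)).symm

section
variable {E : Type*} [NormedAddCommGroup E]

/-- The increment bound shared by `a ↦ L a a` and `a ↦ ‖a‖²`; it is what makes `f ↦ ∫ q ∘ f`
continuous on `L²`. -/
def HasQuadraticIncrements (q : E → ℝ) (C : ℝ≥0) : Prop :=
  ∀ a b, |q a - q b| ≤ C * (‖a - b‖ * (‖a - b‖ + 2 * ‖b‖))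

theorem hasQuadraticIncrements_norm_sq :
    HasQuadraticIncrements (fun a : E => ‖a‖ ^ 2) 1 := by
  intro a b
  have h1 : |‖a‖ - ‖b‖| ≤ ‖a - b‖ := abs_norm_sub_norm_le a b
  have h2 : ‖a‖ + ‖b‖ ≤ ‖a - b‖ + 2 * ‖b‖ := by
    linarith [norm_le_norm_sub_add a b]
  calc |‖a‖ ^ 2 - ‖b‖ ^ 2| = |‖a‖ - ‖b‖| * (‖a‖ + ‖b‖) := by
        rw [sq_sub_sq, abs_mul, abs_of_nonneg (by positivity : 0 ≤ ‖a‖ + ‖b‖), mul_comm]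
    _ ≤ (1 : ℝ≥0) * (‖a - b‖ * (‖a - b‖ + 2 * ‖b‖)) := by
        rw [NNReal.coe_one, one_mul]; exact mul_le_mul h1 h2 (by positivity) (norm_nonneg _)

theorem ContinuousLinearMap.hasQuadraticIncrements [NormedSpace ℝ E] (L : E →L[ℝ] E →L[ℝ] ℝ) :
    HasQuadraticIncrements (fun a => L a a) ‖L‖₊ := by
  intro a b
  have key : L a a - L b b = L (a - b) (a - b) + L (a - b) b + L b (a - b) := by
    simp only [map_sub, sub_apply]; ring
  have h1 := L.le_opNorm₂ (a - b) (a - b)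
  have h2 := L.le_opNorm₂ (a - b) b
  have h3 := L.le_opNorm₂ b (a - b)
  simp only [Real.norm_eq_abs] at h1 h2 h3
  rw [key, coe_nnnorm]
  linarith [abs_add_three (L (a - b) (a - b)) (L (a - b) b) (L b (a - b))]

namespace HasQuadraticIncrements
variable {q : E → ℝ} {C : ℝ≥0}

theorem abs_le (hq : HasQuadraticIncrements q C) (hq0 : q 0 = 0) (a : E) :
    |q a| ≤ C * ‖a‖ ^ 2 := by
  simpa [hq0, sq] using hq a 0

theorem continuous (hq : HasQuadraticIncrements q C) : Continuous q := by
  refine continuous_iff_continuousAt.2 fun b => ?_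
  rw [ContinuousAt, tendsto_iff_norm_sub_tendsto_zero]
  refine squeeze_zero (fun _ => norm_nonneg _) (fun a => hq a b) ?_
  have h : Tendsto (fun a => ‖a - b‖) (𝓝 b) (𝓝 0) := tendsto_iff_norm_sub_tendsto_zero.1 tendsto_id
  simpa using tendsto_const_nhds.mul (h.mul (h.add tendsto_const_nhds))

variable {α : Type*} {m : MeasurableSpace α} {μ : Measure α}

theorem integrable_comp (hq : HasQuadraticIncrements q C) (hq0 : q 0 = 0) {f : α → E}
    (hf : MemLp f 2 μ) : Integrable (fun x => q (f x)) μ :=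
  (((memLp_two_iff_integrable_sq_norm hf.1).1 hf).const_mul C).mono'
    (hq.continuous.comp_aestronglyMeasurable hf.1)
    (Eventually.of_forall fun x => hq.abs_le hq0 (f x))

theorem abs_integral_sub_integral_le (hq : HasQuadraticIncrements q C) (hq0 : q 0 = 0)
    {f g : α → E} (hf : MemLp f 2 μ) (hg : MemLp g 2 μ) :
    |∫ x, q (f x) ∂μ - ∫ x, q (g x) ∂μ|
      ≤ C * (∫ x, ‖f x - g x‖ ^ 2 ∂μ
        + 2 * (√(∫ x, ‖f x - g x‖ ^ 2 ∂μ) * √(∫ x, ‖g x‖ ^ 2 ∂μ))) := by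
  have hfg : MemLp (f - g) 2 μ := hf.sub hg
  have hsq : Integrable (fun x => ‖f x - g x‖ ^ 2) μ :=
    (memLp_two_iff_integrable_sq_norm hfg.1).1 hfg
  have hprod : Integrable (fun x => ‖f x - g x‖ * ‖g x‖) μ := hfg.norm.integrable_mul hg.norm
  have hcs : ∫ x, ‖f x - g x‖ * ‖g x‖ ∂μ
      ≤ √(∫ x, ‖f x - g x‖ ^ 2 ∂μ) * √(∫ x, ‖g x‖ ^ 2 ∂μ) :=
    integral_mul_le_sqrt_mul_sqrt (Eventually.of_forall fun _ => norm_nonneg _)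
      (Eventually.of_forall fun _ => norm_nonneg _) hfg.norm hg.norm
  calc |∫ x, q (f x) ∂μ - ∫ x, q (g x) ∂μ|
      = |∫ x, (q (f x) - q (g x)) ∂μ| := by
        rw [integral_sub (hq.integrable_comp hq0 hf) (hq.integrable_comp hq0 hg)]
    _ ≤ ∫ x, |q (f x) - q (g x)| ∂μ := abs_integral_le_integral_abs
    _ ≤ ∫ x, C * (‖f x - g x‖ ^ 2 + 2 * (‖f x - g x‖ * ‖g x‖)) ∂μ := by
        refine integral_mono_of_nonneg (Eventually.of_forall fun _ => abs_nonneg _)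
          ((hsq.add (hprod.const_mul 2)).const_mul C) (Eventually.of_forall fun x => ?_)
        exact (hq (f x) (g x)).trans_eq (by ring)
    _ = C * (∫ x, ‖f x - g x‖ ^ 2 ∂μ + 2 * ∫ x, ‖f x - g x‖ * ‖g x‖ ∂μ) := by
        rw [integral_const_mul, integral_add hsq (hprod.const_mul 2), integral_const_mul]
    _ ≤ _ := by gcongr

theorem tendsto_integral_comp (hq : HasQuadraticIncrements q C) (hq0 : q 0 = 0) {ι : Type*}
    {l : Filter ι} {f : ι → α → E} {g : α → E} (hf : ∀ i, MemLp (f i) 2 μ) (hg : MemLp g 2 μ)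
    (hfg : Tendsto (fun i => ∫ x, ‖f i x - g x‖ ^ 2 ∂μ) l (𝓝 0)) :
    Tendsto (fun i => ∫ x, q (f i x) ∂μ) l (𝓝 (∫ x, q (g x) ∂μ)) := by
  rw [tendsto_iff_norm_sub_tendsto_zero]
  refine squeeze_zero (fun _ => norm_nonneg _)
    (fun i => hq.abs_integral_sub_integral_le hq0 (hf i) hg) ?_
  simpa using (hfg.add ((hfg.sqrt.mul tendsto_const_nhds).const_mul 2)).const_mul (C : ℝ)

end HasQuadraticIncrements

theorem exists_continuousBilin_eq_of_symm [NormedSpace ℝ E] [FiniteDimensional ℝ E]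
    (B : E → E → ℝ)
    (hsymm : ∀ G H, B G H = B H G) (hadd : ∀ G G' H, B (G + G') H = B G H + B G' H)
    (hsmul : ∀ (t : ℝ) G H, B (t • G) H = t * B G H) :
    ∃ L : E →L[ℝ] E →L[ℝ] ℝ, ∀ G H, L G H = B G H := by
  let L₀ : E →ₗ[ℝ] E →ₗ[ℝ] ℝ := LinearMap.mk₂ ℝ B hadd hsmul
    (fun G H H' => by rw [hsymm, hadd, hsymm H, hsymm H'])
    (fun t G H => by rw [hsymm, hsmul, hsymm, smul_eq_mul])
  exact ⟨LinearMap.toContinuousLinearMap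
    (LinearMap.toContinuousLinearMap.toLinearMap ∘ₗ L₀), fun _ _ => rfl⟩

theorem abs_sub_le_toReal_mul_sq_of_norm_le {V Q : E → ℝ} {ρ : ℝ → ℝ≥0∞} (hρ : Monotone ρ)
    (hexp : ∀ G, ENNReal.ofReal |V G - Q G| ≤ ρ ‖G‖ * ENNReal.ofReal (‖G‖ ^ 2))
    {G : E} {r : ℝ} (hG : ‖G‖ ≤ r) (hρr : ρ r ≠ ∞) :
    |V G - Q G| ≤ (ρ r).toReal * ‖G‖ ^ 2 := by
  have h := (hexp G).trans (mul_le_mul_left (hρ hG) _)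
  rw [← ENNReal.ofReal_toReal hρr, ← ENNReal.ofReal_mul ENNReal.toReal_nonneg] at h
  exact (ENNReal.ofReal_le_ofReal_iff (by positivity)).1 h

variable {α : Type*} {m : MeasurableSpace α} {μ : Measure α}

theorem abs_inv_sq_mul_integral_sub_integral_le [NormedSpace ℝ E] {V Q : E → ℝ}
    (hQ : ∀ (t : ℝ) G, Q (t • G) = t ^ 2 * Q G) {h : α → E} {c η : ℝ} (hc : c ≠ 0)
    (hVm : AEStronglyMeasurable (fun x => V (c • h x)) μ)
    (hQi : Integrable (fun x => Q (h x)) μ) (hh : Integrable (fun x => ‖h x‖ ^ 2) μ)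
    (hbound : ∀ᵐ x ∂μ, |V (c • h x) - Q (c • h x)| ≤ η * ‖c • h x‖ ^ 2) :
    |(c ^ 2)⁻¹ * ∫ x, V (c • h x) ∂μ - ∫ x, Q (h x) ∂μ| ≤ η * ∫ x, ‖h x‖ ^ 2 ∂μ := by
  have hnorm : ∀ x, η * ‖c • h x‖ ^ 2 = η * c ^ 2 * ‖h x‖ ^ 2 := fun x => by
    rw [norm_smul, Real.norm_eq_abs, mul_pow, sq_abs, mul_assoc]
  simp only [hnorm] at hbound
  have hQc : Integrable (fun x => Q (c • h x)) μ := by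
    simpa only [hQ] using hQi.const_mul (c ^ 2)
  have hV : Integrable (fun x => V (c • h x)) μ := by
    refine ((hh.const_mul (η * c ^ 2)).add hQc.abs).mono' hVm ?_
    filter_upwards [hbound] with x hx
    rw [Pi.add_apply, Real.norm_eq_abs]
    linarith [abs_sub_abs_le_abs_sub (V (c • h x)) (Q (c • h x))]
  have hc2 : 0 < c ^ 2 := by positivity
  calc |(c ^ 2)⁻¹ * ∫ x, V (c • h x) ∂μ - ∫ x, Q (h x) ∂μ|
      = (c ^ 2)⁻¹ * |∫ x, (V (c • h x) - Q (c • h x)) ∂μ| := by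
        rw [integral_sub hV hQc, ← abs_of_pos (inv_pos.2 hc2), ← abs_mul,
          abs_of_pos (inv_pos.2 hc2)]
        simp only [hQ, integral_const_mul]
        field_simp
    _ ≤ (c ^ 2)⁻¹ * ∫ x, η * c ^ 2 * ‖h x‖ ^ 2 ∂μ := by
        gcongr
        exact abs_integral_le_integral_abs.trans
          (integral_mono_ae (hV.sub hQc).abs (hh.const_mul _) hbound)
    _ = η * ∫ x, ‖h x‖ ^ 2 ∂μ := by
        rw [integral_const_mul]; field_simp

theorem abs_inv_sq_mul_integral_sub_integral_le_of_expansion [NormedSpace ℝ E] {V Q : E → ℝ}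
    {ρ : ℝ → ℝ≥0∞} (hρ : Monotone ρ)
    (hexp : ∀ G, ENNReal.ofReal |V G - Q G| ≤ ρ ‖G‖ * ENNReal.ofReal (‖G‖ ^ 2))
    (hQ : ∀ (t : ℝ) G, Q (t • G) = t ^ 2 * Q G) {h : α → E} {c K : ℝ} (hc : 0 < c)
    (hK : ∀ᵐ x ∂μ, ‖h x‖ ≤ K) (hρK : ρ (c * K) ≠ ∞)
    (hVm : AEStronglyMeasurable (fun x => V (c • h x)) μ)
    (hQi : Integrable (fun x => Q (h x)) μ) (hh : Integrable (fun x => ‖h x‖ ^ 2) μ) :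
    |(c ^ 2)⁻¹ * ∫ x, V (c • h x) ∂μ - ∫ x, Q (h x) ∂μ|
      ≤ (ρ (c * K)).toReal * ∫ x, ‖h x‖ ^ 2 ∂μ := by
  refine abs_inv_sq_mul_integral_sub_integral_le hQ hc.ne' hVm hQi hh ?_
  filter_upwards [hK] with x hx
  refine abs_sub_le_toReal_mul_sq_of_norm_le hρ hexp ?_ hρK
  rw [norm_smul, Real.norm_of_nonneg hc.le]
  exact mul_le_mul_of_nonneg_left hx hc.le

end

section
attribute [local instance] Matrix.frobeniusNormedAddCommGroup

theorem fro_eq_frobenius_norm {d : ℕ} (A : Matrix (Fin d) (Fin d) ℝ) : fro A = ‖A‖ := by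
  simp only [fro, Matrix.frobenius_norm_def, Real.sqrt_eq_rpow, Real.rpow_two, Real.norm_eq_abs,
    sq_abs]

end

theorem stmt8_general {d : ℕ} (Ω : Set (Fin d → ℝ))
    (W Q : Matrix (Fin d) (Fin d) ℝ → ℝ)
    (B : Matrix (Fin d) (Fin d) ℝ → Matrix (Fin d) (Fin d) ℝ → ℝ)
    (hWcont : Continuous W)
    -- `Q` is the nonnegative quadratic form of a symmetric bilinear form `B`
    (hQB : ∀ G, Q G = B G G)
    (hBsymm : ∀ G H, B G H = B H G)
    (hBadd : ∀ G G' H, B (G + G') H = B G H + B G' H)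
    (hBsmul : ∀ (t : ℝ) G H, B (t • G) H = t * B G H)
    -- the expansion error: `|r(G)| ≤ ρ(|G|)|G|²`, `ρ` increasing with `ρ(0+) = 0`
    (ρ : ℝ → ENNReal) (hρmono : Monotone ρ)
    (hρ0 : Filter.Tendsto ρ (nhdsWithin 0 (Set.Ioi (0:ℝ))) (nhds 0))
    (hr : ∀ G, ENNReal.ofReal |W (1 + G) - Q G|
      ≤ ρ (fro G) * ENNReal.ofReal ((fro G) ^ 2))
    -- sequences
    (c : ℕ → ℝ) (hc : ∀ n, 0 < c n)
    (F : ℕ → (Fin d → ℝ) → Matrix (Fin d) (Fin d) ℝ)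
    (Flim : (Fin d → ℝ) → Matrix (Fin d) (Fin d) ℝ)
    (hFmeas : ∀ n, AEStronglyMeasurable (F n) (volume.restrict Ω))
    (hFlimmeas : AEStronglyMeasurable Flim (volume.restrict Ω))
    (hFL2 : ∀ n, IntegrableOn (fun x => (fro (F n x)) ^ 2) Ω volume)
    (hFlimL2 : IntegrableOn (fun x => (fro (Flim x)) ^ 2) Ω volume)
    -- `c_ε ‖F_ε‖_{L^∞(Ω)} → 0`
    (K : ℕ → ℝ)
    (hK : ∀ n, ∀ᵐ x ∂(volume.restrict Ω), fro (F n x) ≤ K n)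
    (hcK : Filter.Tendsto (fun n => c n * K n) Filter.atTop (nhds 0))
    -- `F_ε → F` strongly in `L²(Ω)`
    (hstrong : Filter.Tendsto (fun n => ∫ x in Ω, (fro (F n x - Flim x)) ^ 2)
      Filter.atTop (nhds 0)) :
    Filter.Tendsto (fun n => ((c n) ^ 2)⁻¹ * ∫ x in Ω, W (1 + c n • F n x))
      Filter.atTop (nhds (∫ x in Ω, Q (Flim x))) := by
  let _ : NormedAddCommGroup (Matrix (Fin d) (Fin d) ℝ) := Matrix.frobeniusNormedAddCommGroup
  let _ : NormedSpace ℝ (Matrix (Fin d) (Fin d) ℝ) := Matrix.frobeniusNormedSpace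
  simp only [fro_eq_frobenius_norm] at hr hFL2 hFlimL2 hK hstrong
  obtain ⟨L, hL⟩ := exists_continuousBilin_eq_of_symm B hBsymm hBadd hBsmul
  have hQL : Q = fun G => L G G := funext fun G => (hQB G).trans (hL G G).symm
  have hQ : HasQuadraticIncrements Q ‖L‖₊ := hQL ▸ L.hasQuadraticIncrements
  have hQ0 : Q 0 = 0 := by simp [hQL]
  have hQsmul : ∀ (t : ℝ) G, Q (t • G) = t ^ 2 * Q G := fun t G => by
    simp only [hQL, map_smul, smul_apply, smul_eq_mul]; ring
  have hF : ∀ n, MemLp (F n) 2 (volume.restrict Ω) := fun n =>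
    (memLp_two_iff_integrable_sq_norm (hFmeas n)).2 (hFL2 n)
  have hFlim : MemLp Flim 2 (volume.restrict Ω) :=
    (memLp_two_iff_integrable_sq_norm hFlimmeas).2 hFlimL2
  -- `c n * K n` need not be positive, hence the two-sided limit
  have hρ : Tendsto (fun n => ρ (c n * K n)) atTop (𝓝 0) :=
    (hρmono.tendsto_nhds_zero_of_nhdsGT hρ0).comp hcK
  have herr : ∀ᶠ n in atTop,
      ‖((c n) ^ 2)⁻¹ * (∫ x in Ω, W (1 + c n • F n x)) - ∫ x in Ω, Q (F n x)‖
        ≤ (ρ (c n * K n)).toReal * ∫ x in Ω, ‖F n x‖ ^ 2 := by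
    filter_upwards [hρ.eventually_ne ENNReal.zero_ne_top] with n hn
    exact abs_inv_sq_mul_integral_sub_integral_le_of_expansion (V := fun G => W (1 + G)) hρmono
      hr hQsmul (hc n) (hK n) hn
      (hWcont.comp_aestronglyMeasurable (((hFmeas n).const_smul (c n)).const_add 1))
      (hQ.integrable_comp hQ0 (hF n)) (hFL2 n)
  have hdiff := squeeze_zero_norm' herr (by
    simpa using ((ENNReal.tendsto_toReal ENNReal.zero_ne_top).comp hρ).mul
      (hasQuadraticIncrements_norm_sq.tendsto_integral_comp (by simp) hF hFlim hstrong))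
  simpa only [zero_add, sub_add_cancel] using
    hdiff.add (hQ.tendsto_integral_comp hQ0 hF hFlim hstrong)

/-- Continuity of the rescaled energy under strong `L²` convergence with an `L^∞` control:
`lim_{ε→0} c_ε^{−2} ∫_Ω W(I + c_ε F_ε) dx = ∫_Ω Q(F) dx`. -/
theorem stmt8 {d : ℕ} (hd : 2 ≤ d) (Ω : Set (Fin d → ℝ))
    (hΩm : MeasurableSet Ω) (hΩb : IsBounded Ω)
    (W Q : Matrix (Fin d) (Fin d) ℝ → ℝ)
    (B : Matrix (Fin d) (Fin d) ℝ → Matrix (Fin d) (Fin d) ℝ → ℝ)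
    (hWcont : Continuous W) (hWnonneg : ∀ F, 0 ≤ W F) (hWI : W 1 = 0)
    -- `Q` is the nonnegative quadratic form of a symmetric bilinear form `B`
    (hQB : ∀ G, Q G = B G G)
    (hBsymm : ∀ G H, B G H = B H G)
    (hBadd : ∀ G G' H, B (G + G') H = B G H + B G' H)
    (hBsmul : ∀ (t : ℝ) G H, B (t • G) H = t * B G H)
    (hQnonneg : ∀ G, 0 ≤ Q G)
    -- the expansion error: `|r(G)| ≤ ρ(|G|)|G|²`, `ρ` increasing with `ρ(0+) = 0`
    (ρ : ℝ → ENNReal) (hρmono : Monotone ρ)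
    (hρ0 : Filter.Tendsto ρ (nhdsWithin 0 (Set.Ioi (0:ℝ))) (nhds 0))
    (hr : ∀ G, ENNReal.ofReal |W (1 + G) - Q G|
      ≤ ρ (fro G) * ENNReal.ofReal ((fro G) ^ 2))
    -- sequences
    (c : ℕ → ℝ) (hc : ∀ n, 0 < c n) (hc0 : Filter.Tendsto c Filter.atTop (nhds 0))
    (F : ℕ → (Fin d → ℝ) → Matrix (Fin d) (Fin d) ℝ)
    (Flim : (Fin d → ℝ) → Matrix (Fin d) (Fin d) ℝ)
    (hFmeas : ∀ n, AEStronglyMeasurable (F n) (volume.restrict Ω))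
    (hFlimmeas : AEStronglyMeasurable Flim (volume.restrict Ω))
    (hFL2 : ∀ n, IntegrableOn (fun x => (fro (F n x)) ^ 2) Ω volume)
    (hFlimL2 : IntegrableOn (fun x => (fro (Flim x)) ^ 2) Ω volume)
    -- `c_ε ‖F_ε‖_{L^∞(Ω)} → 0`
    (K : ℕ → ℝ)
    (hK : ∀ n, ∀ᵐ x ∂(volume.restrict Ω), fro (F n x) ≤ K n)
    (hcK : Filter.Tendsto (fun n => c n * K n) Filter.atTop (nhds 0))
    -- `F_ε → F` strongly in `L²(Ω)`
    (hstrong : Filter.Tendsto (fun n => ∫ x in Ω, (fro (F n x - Flim x)) ^ 2)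
      Filter.atTop (nhds 0)) :
    Filter.Tendsto (fun n => ((c n) ^ 2)⁻¹ * ∫ x in Ω, W (1 + c n • F n x))
      Filter.atTop (nhds (∫ x in Ω, Q (Flim x))) :=
  stmt8_general Ω W Q B hWcont hQB hBsymm hBadd hBsmul ρ hρmono hρ0 hr c hc F Flim hFmeas hFlimmeas
    hFL2 hFlimL2 K hK hcK hstrong
end

section
/- Let f : Y × ℝ^k → [0,∞] be a Borel map, where Y = [0,1)^d, and let {x} ∈ Y denote the fractional part of x ∈ ℝ^d (so x = [x] + {x} with [x] ∈ ℤ^d). Let Ω ⊂ ℝ^d be measurable, ε > 0, and φ : Ω → ℝ^k measurable. Define the unfolding U_ε(φ)(x,y) := φ*(ε[x/ε] + εy) for (x,y) ∈ ℝ^d × Y, where φ* is the extension of φ by zero to ℝ^d. Then ∫_Ω f({x/ε}, φ(x)) dx = ∫_{ℝ^d} ∫_Y f(y, U_ε(φ)(x,y)) dy dx, provided f(y, 0) = 0 for all y. -/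
open MeasureTheory Filter Topology

/-- Componentwise fractional part `{x} ∈ Y = [0,1)^d`. -/
noncomputable def fracPart {d : ℕ} (x : Fin d → ℝ) : Fin d → ℝ :=
  fun i => Int.fract (x i)

/-- Componentwise integer part `[x] ∈ ℤ^d` (as a real vector). -/
noncomputable def intPart {d : ℕ} (x : Fin d → ℝ) : Fin d → ℝ :=
  fun i => (⌊x i⌋ : ℝ)

/-- The reference periodicity cell `Y = [0,1)^d`. -/
def Ybox (d : ℕ) : Set (Fin d → ℝ) :=
  Set.pi Set.univ fun _ => Set.Ico (0:ℝ) 1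

/-- The periodic unfolding `U_ε(φ)(x,y) = φ*(ε[x/ε] + εy)` of a map `φ : Ω → ℝ^k`,
where `φ*` is the extension of `φ` by zero to `ℝ^d`. -/
noncomputable def unfoldOp {d k : ℕ} (ε : ℝ) (Ω : Set (Fin d → ℝ))
    (φ : (Fin d → ℝ) → (Fin k → ℝ)) :
    (Fin d → ℝ) → (Fin d → ℝ) → (Fin k → ℝ) :=
  fun x y => Set.indicator Ω φ (ε • intPart (ε⁻¹ • x) + ε • y)

/-!
Rescaling `x = ε • z` reduces the identity to `ε = 1`. Then `ℝ^d` is the disjoint union of the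
lattice cells `ξ + Y`, `ξ ∈ ℤ^d`; on `ξ + Y` the integer part is constantly `ξ`, and translating by
`ξ` turns the integral over the cell into one over `Y`, where `{ξ + y} = y`. Extending `φ` by zero
changes nothing because `f y 0 = 0`.
-/

open scoped ENNReal

theorem MeasureTheory.Measure.lintegral_comp_smul {E : Type*} [NormedAddCommGroup E]
    [NormedSpace ℝ E] [MeasurableSpace E] [BorelSpace E] [FiniteDimensional ℝ E]
    (μ : Measure E) [μ.IsAddHaarMeasure] {r : ℝ} (hr : r ≠ 0) (F : E → ℝ≥0∞) :
    ∫⁻ x, F (r • x) ∂μ = ENNReal.ofReal |(r ^ Module.finrank ℝ E)⁻¹| * ∫⁻ x, F x ∂μ := by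
  have hemb : MeasurableEmbedding (r • · : E → E) :=
    (MeasurableEquiv.smul₀ r hr).measurableEmbedding
  rw [← hemb.lintegral_map, Measure.map_addHaar_smul μ hr, lintegral_smul_measure, smul_eq_mul]

namespace Unfolding

variable {d : ℕ}

theorem measurableSet_Ybox : MeasurableSet (Ybox d) :=
  .univ_pi fun _ => measurableSet_Ico

theorem volume_Ybox : volume (Ybox d) = 1 := by
  simp [Ybox, Real.volume_pi_Ico]

theorem fracPart_intPart_add {y : Fin d → ℝ} (hy : y ∈ Ybox d) (z : Fin d → ℝ) :
    fracPart (intPart z + y) = y := by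
  funext i
  obtain ⟨hy0, hy1⟩ := hy i (Set.mem_univ i)
  simp only [fracPart, intPart, Pi.add_apply, Int.fract_intCast_add, Int.fract_eq_self]
  exact ⟨hy0, hy1⟩

/-- The lattice cell `ξ + Y`. -/
def intCell (ξ : Fin d → ℤ) : Set (Fin d → ℝ) :=
  (fun z i => ⌊z i⌋) ⁻¹' {ξ}

theorem measurableSet_intCell (ξ : Fin d → ℤ) : MeasurableSet (intCell ξ) :=
  measurable_pi_lambda _ (fun i => Int.measurable_floor.comp (measurable_pi_apply i))
    (measurableSet_singleton ξ)

theorem intPart_of_mem_intCell {ξ : Fin d → ℤ} {z : Fin d → ℝ} (hz : z ∈ intCell ξ) :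
    intPart z = fun i => (ξ i : ℝ) := by
  funext i
  simp [intPart, ← congrFun (Set.mem_singleton_iff.mp hz) i]

theorem preimage_add_intCell (ξ : Fin d → ℤ) :
    ((fun i => (ξ i : ℝ)) + ·) ⁻¹' intCell ξ = Ybox d := by
  ext y
  simp [intCell, Ybox, funext_iff, Int.floor_intCast_add, Int.floor_eq_zero_iff]

theorem volume_intCell (ξ : Fin d → ℤ) : volume (intCell ξ) = 1 := by
  rw [← measure_preimage_add _ (fun i => (ξ i : ℝ)), preimage_add_intCell, volume_Ybox]

theorem setLIntegral_intCell (ξ : Fin d → ℤ) (F : (Fin d → ℝ) → ℝ≥0∞) :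
    ∫⁻ z in intCell ξ, F z = ∫⁻ y in Ybox d, F ((fun i => (ξ i : ℝ)) + y) := by
  rw [← preimage_add_intCell ξ, (measurePreserving_add_left volume _).setLIntegral_comp_preimage_emb
    (MeasurableEquiv.addLeft _).measurableEmbedding]

theorem iUnion_intCell : ⋃ ξ : Fin d → ℤ, intCell ξ = Set.univ :=
  Set.eq_univ_of_forall fun _ => Set.mem_iUnion.mpr ⟨_, rfl⟩

theorem lintegral_eq_tsum_setLIntegral_intCell (F : (Fin d → ℝ) → ℝ≥0∞) :
    ∫⁻ z, F z = ∑' ξ : Fin d → ℤ, ∫⁻ z in intCell ξ, F z := by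
  rw [← lintegral_iUnion measurableSet_intCell (pairwise_disjoint_fiber _),
    iUnion_intCell, Measure.restrict_univ]

theorem lintegral_eq_lintegral_Ybox_intPart_add (F : (Fin d → ℝ) → ℝ≥0∞) :
    ∫⁻ z, F z = ∫⁻ z, ∫⁻ y in Ybox d, F (intPart z + y) := by
  rw [lintegral_eq_tsum_setLIntegral_intCell, lintegral_eq_tsum_setLIntegral_intCell]
  refine tsum_congr fun ξ => ?_
  have hconst : ∀ z ∈ intCell ξ, ∫⁻ y in Ybox d, F (intPart z + y)
      = ∫⁻ y in Ybox d, F ((fun i => (ξ i : ℝ)) + y) := fun z hz => by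
    rw [intPart_of_mem_intCell hz]
  rw [setLIntegral_congr_fun (measurableSet_intCell ξ) hconst, setLIntegral_const, volume_intCell,
    mul_one, setLIntegral_intCell]

theorem lintegral_eq_lintegral_Ybox_smul_intPart_add {ε : ℝ} (hε : ε ≠ 0)
    (F : (Fin d → ℝ) → ℝ≥0∞) :
    ∫⁻ x, F x = ∫⁻ x, ∫⁻ y in Ybox d, F (ε • intPart (ε⁻¹ • x) + ε • y) := by
  have hc : ENNReal.ofReal |(ε ^ Module.finrank ℝ (Fin d → ℝ))⁻¹| ≠ 0 := by
    simp [hε]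
  rw [← ENNReal.mul_right_inj hc ENNReal.ofReal_ne_top, ← Measure.lintegral_comp_smul _ hε,
    ← Measure.lintegral_comp_smul _ hε, lintegral_eq_lintegral_Ybox_intPart_add]
  simp only [inv_smul_smul₀ hε, smul_add]

end Unfolding

open Unfolding in
theorem stmt12_general {d k : ℕ} (ε : ℝ) (hε : 0 < ε)
    (Ω : Set (Fin d → ℝ)) (hΩm : MeasurableSet Ω)
    (f : (Fin d → ℝ) → (Fin k → ℝ) → ENNReal)
    (hf0 : ∀ y, f y 0 = 0)
    (φ : (Fin d → ℝ) → (Fin k → ℝ)) :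
    (∫⁻ x in Ω, f (fracPart (ε⁻¹ • x)) (φ x))
      = ∫⁻ x, ∫⁻ y in Ybox d, f y (unfoldOp ε Ω φ x y) := by
  have hextend : ∫⁻ x in Ω, f (fracPart (ε⁻¹ • x)) (φ x)
      = ∫⁻ x, f (fracPart (ε⁻¹ • x)) (Ω.indicator φ x) := by
    rw [← lintegral_indicator hΩm]
    refine lintegral_congr fun x => ?_
    by_cases hx : x ∈ Ω <;> simp [hx, hf0]
  rw [hextend, lintegral_eq_lintegral_Ybox_smul_intPart_add hε.ne']
  refine lintegral_congr fun x => setLIntegral_congr_fun measurableSet_Ybox fun y hy => ?_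
  rw [← smul_add, inv_smul_smul₀ hε.ne', fracPart_intPart_add hy, unfoldOp, smul_add]

/-- The unfolding integral identity:
`∫_Ω f({x/ε}, φ(x)) dx = ∫_{ℝ^d} ∫_Y f(y, U_ε(φ)(x,y)) dy dx`, provided `f(y,0) = 0`. -/
theorem stmt12 {d k : ℕ} (hd : 1 ≤ d) (ε : ℝ) (hε : 0 < ε)
    (Ω : Set (Fin d → ℝ)) (hΩm : MeasurableSet Ω)
    (f : (Fin d → ℝ) → (Fin k → ℝ) → ENNReal)
    (hf : Measurable (Function.uncurry f))
    (hf0 : ∀ y, f y 0 = 0)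
    (φ : (Fin d → ℝ) → (Fin k → ℝ)) (hφ : Measurable φ) :
    (∫⁻ x in Ω, f (fracPart (ε⁻¹ • x)) (φ x))
      = ∫⁻ x, ∫⁻ y in Ybox d, f y (unfoldOp ε Ω φ x y) :=
  stmt12_general ε hε Ω hΩm f hf0 φ
end

section
/- For every ε > 0 the periodic unfolding operator U_ε, defined by U_ε(u)(x,y) := u*(ε[x/ε] + εy) for u ∈ L²(Ω) (with u* the zero-extension of u to ℝ^d), is a linear isometry from L²(Ω) into L²(ℝ^d × Y): ‖U_ε(u)‖_{L²(ℝ^d×Y)} = ‖u‖_{L²(Ω)}. Moreover U_ε(uv) = U_ε(u)·U_ε(v) for u, v ∈ L²(Ω). -/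
/-!
Tile `ℝ^d` by the cubes `ε(ξ + Y)`, `ξ ∈ ℤ^d`. On such a cube `ε[x/ε]` is the constant corner
`εξ`, so the `x`-integral over it contributes `ε^d ∫_Y g(εξ + εy) dy`, and the affine change of
variables `z = εξ + εy`, with Jacobian `ε^d`, turns this into `∫_{ε(ξ+Y)} g`. Summing over the
disjoint cubes gives `∫_{ℝ^d} ∫_Y g(ε[x/ε] + εy) dy dx = ∫_{ℝ^d} g`; for `g = |u*|²` this is the
isometry. Linearity and the product rule hold pointwise, since zero extension commutes with both.
-/

open MeasureTheory Filter Topology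

/-- The periodic unfolding `U_ε(u)(x,y) = u*(ε[x/ε] + εy)` of `u : Ω → ℝ`,
where `u*` is the extension of `u` by zero to `ℝ^d`. -/
noncomputable def unfoldR {d : ℕ} (ε : ℝ) (Ω : Set (Fin d → ℝ))
    (u : (Fin d → ℝ) → ℝ) : (Fin d → ℝ) → (Fin d → ℝ) → ℝ :=
  fun x y => Set.indicator Ω u (ε • intPart (ε⁻¹ • x) + ε • y)

open Module ENNReal

theorem MeasureTheory.Measure.map_const_add_smul_addHaar {E : Type*} [NormedAddCommGroup E]
    [NormedSpace ℝ E] [MeasurableSpace E] [BorelSpace E] [FiniteDimensional ℝ E]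
    (μ : Measure E) [μ.IsAddHaarMeasure] (a : E) {r : ℝ} (hr : r ≠ 0) :
    Measure.map (fun y => a + r • y) μ = ENNReal.ofReal |(r ^ finrank ℝ E)⁻¹| • μ := by
  rw [show (fun y => a + r • y) = (a + ·) ∘ (r • ·) from rfl,
    ← Measure.map_map (measurable_const_add a) (measurable_const_smul r),
    Measure.map_addHaar_smul μ hr, Measure.map_smul, map_add_left_eq_self]

namespace PeriodicUnfolding

variable {d : ℕ} {ε : ℝ}

def cell (ε : ℝ) (ξ : Fin d → ℤ) : Set (Fin d → ℝ) :=
  Set.pi Set.univ fun i => Set.Ico (ε * ξ i) (ε * ξ i + ε)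

def corner (ε : ℝ) (ξ : Fin d → ℤ) : Fin d → ℝ :=
  fun i => ε * ξ i

theorem measurableSet_cell (ε : ℝ) (ξ : Fin d → ℤ) : MeasurableSet (cell ε ξ) :=
  MeasurableSet.univ_pi fun _ => measurableSet_Ico

theorem mem_cell_iff (hε : 0 < ε) {ξ : Fin d → ℤ} {x : Fin d → ℝ} :
    x ∈ cell ε ξ ↔ ∀ i, ⌊ε⁻¹ * x i⌋ = ξ i := by
  simp only [cell, Set.mem_univ_pi, Set.mem_Ico]
  refine forall_congr' fun i => ?_
  rw [Int.floor_eq_iff, le_inv_mul_iff₀ hε, inv_mul_lt_iff₀ hε, mul_add, mul_one]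

theorem iUnion_cell (hε : 0 < ε) : ⋃ ξ : Fin d → ℤ, cell ε ξ = Set.univ :=
  Set.eq_univ_of_forall fun x =>
    Set.mem_iUnion.2 ⟨fun i => ⌊ε⁻¹ * x i⌋, (mem_cell_iff hε).2 fun _ => rfl⟩

theorem pairwise_disjoint_cell (hε : 0 < ε) :
    Pairwise (Function.onFun Disjoint (cell (d := d) ε)) := fun _ _ hne =>
  Set.disjoint_left.2 fun _ hξ hη => hne <| funext fun i =>
    ((mem_cell_iff hε).1 hξ i).symm.trans ((mem_cell_iff hε).1 hη i)

theorem volume_cell (ξ : Fin d → ℤ) : volume (cell ε ξ) = ENNReal.ofReal ε ^ d := by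
  simp [cell, volume_pi_pi, Real.volume_Ico]

theorem smul_intPart_eq_corner (hε : 0 < ε) {ξ : Fin d → ℤ} {x : Fin d → ℝ}
    (hx : x ∈ cell ε ξ) : ε • intPart (ε⁻¹ • x) = corner ε ξ := by
  funext i
  simp [intPart, corner, (mem_cell_iff hε).1 hx i]

theorem preimage_cell (hε : 0 < ε) (ξ : Fin d → ℤ) :
    (fun y => corner ε ξ + ε • y) ⁻¹' cell ε ξ = Ybox d := by
  ext y
  simp only [Set.mem_preimage, cell, Ybox, corner, Set.mem_univ_pi, Set.mem_Ico, Pi.add_apply,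
    Pi.smul_apply, smul_eq_mul]
  refine forall_congr' fun i => ?_
  rw [le_add_iff_nonneg_right, add_lt_add_iff_left, mul_nonneg_iff_of_pos_left hε,
    mul_lt_iff_lt_one_right hε]

theorem setLIntegral_cell_eq (hε : 0 < ε) (ξ : Fin d → ℤ) {g : (Fin d → ℝ) → ℝ≥0∞}
    (hg : Measurable g) :
    ∫⁻ z in cell ε ξ, g z = ENNReal.ofReal ε ^ d * ∫⁻ y in Ybox d, g (corner ε ξ + ε • y) := by
  have hJ : ENNReal.ofReal |(ε ^ d)⁻¹| = (ENNReal.ofReal ε ^ d)⁻¹ := by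
    rw [abs_of_pos (by positivity), ENNReal.ofReal_inv_of_pos (by positivity),
      ENNReal.ofReal_pow hε.le]
  have hmap := Measure.map_const_add_smul_addHaar (volume : Measure (Fin d → ℝ)) (corner ε ξ)
    hε.ne'
  rw [finrank_fin_fun, hJ] at hmap
  rw [← preimage_cell hε ξ, ← setLIntegral_map (measurableSet_cell ε ξ) hg
    ((measurable_const_smul ε).const_add _), hmap, Measure.restrict_smul, lintegral_smul_measure,
    smul_eq_mul, ← mul_assoc, ENNReal.mul_inv_cancel (by positivity) (by finiteness), one_mul]

theorem lintegral_lintegral_unfold (hε : 0 < ε) {g : (Fin d → ℝ) → ℝ≥0∞} (hg : Measurable g) :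
    ∫⁻ x, ∫⁻ y in Ybox d, g (ε • intPart (ε⁻¹ • x) + ε • y) = ∫⁻ z, g z := by
  rw [← setLIntegral_univ, ← setLIntegral_univ g, ← iUnion_cell hε,
    lintegral_iUnion (measurableSet_cell ε) (pairwise_disjoint_cell hε),
    lintegral_iUnion (measurableSet_cell ε) (pairwise_disjoint_cell hε)]
  refine tsum_congr fun ξ => ?_
  rw [setLIntegral_congr_fun (measurableSet_cell ε ξ) fun x hx => by
      rw [smul_intPart_eq_corner hε hx],
    setLIntegral_const, volume_cell, mul_comm, setLIntegral_cell_eq hε ξ hg]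

end PeriodicUnfolding

theorem unfoldR_linear_comb {d : ℕ} (ε : ℝ) (Ω : Set (Fin d → ℝ)) (a b : ℝ)
    (u v : (Fin d → ℝ) → ℝ) :
    unfoldR ε Ω (fun x => a * u x + b * v x)
      = fun x y => a * unfoldR ε Ω u x y + b * unfoldR ε Ω v x y := by
  funext x y
  by_cases h : ε • intPart (ε⁻¹ • x) + ε • y ∈ Ω <;> simp [unfoldR, h]

theorem unfoldR_mul {d : ℕ} (ε : ℝ) (Ω : Set (Fin d → ℝ)) (u v : (Fin d → ℝ) → ℝ) :
    unfoldR ε Ω (fun x => u x * v x) = fun x y => unfoldR ε Ω u x y * unfoldR ε Ω v x y := by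
  funext x y
  exact congrFun (Set.indicator_mul Ω u v) _

theorem lintegral_lintegral_unfoldR_sq {d : ℕ} {ε : ℝ} (hε : 0 < ε) {Ω : Set (Fin d → ℝ)}
    (hΩ : MeasurableSet Ω) {u : (Fin d → ℝ) → ℝ} (hu : Measurable u) :
    ∫⁻ x, ∫⁻ y in Ybox d, ENNReal.ofReal (unfoldR ε Ω u x y ^ 2)
      = ∫⁻ x in Ω, ENNReal.ofReal (u x ^ 2) := by
  have hsq : ∀ z, ENNReal.ofReal (Ω.indicator u z ^ 2)
      = Ω.indicator (fun w => ENNReal.ofReal (u w ^ 2)) z := fun z => by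
    by_cases hz : z ∈ Ω <;> simp [hz]
  simp only [unfoldR, hsq]
  rw [PeriodicUnfolding.lintegral_lintegral_unfold hε
      ((hu.pow_const 2).ennreal_ofReal.indicator hΩ),
    lintegral_indicator hΩ]

theorem stmt13_general {d : ℕ} (ε : ℝ) (hε : 0 < ε)
    (Ω : Set (Fin d → ℝ)) (hΩo : IsOpen Ω) :
    -- linearity
    (∀ (a b : ℝ) (u v : (Fin d → ℝ) → ℝ),
      unfoldR ε Ω (fun x => a * u x + b * v x)
        = fun x y => a * unfoldR ε Ω u x y + b * unfoldR ε Ω v x y) ∧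
    -- isometry: `‖U_ε u‖_{L²(ℝ^d×Y)} = ‖u‖_{L²(Ω)}`
    (∀ u : (Fin d → ℝ) → ℝ, Measurable u →
      (∫⁻ x, ∫⁻ y in Ybox d, ENNReal.ofReal ((unfoldR ε Ω u x y) ^ 2))
        = ∫⁻ x in Ω, ENNReal.ofReal ((u x) ^ 2)) ∧
    -- product rule
    (∀ u v : (Fin d → ℝ) → ℝ,
      unfoldR ε Ω (fun x => u x * v x)
        = fun x y => unfoldR ε Ω u x y * unfoldR ε Ω v x y) :=
  ⟨unfoldR_linear_comb ε Ω, fun _ hu => lintegral_lintegral_unfoldR_sq hε hΩo.measurableSet hu,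
    unfoldR_mul ε Ω⟩

/-- The periodic unfolding operator is a linear isometry from `L²(Ω)` into `L²(ℝ^d × Y)` and
satisfies the product rule `U_ε(uv) = U_ε(u)·U_ε(v)`. -/
theorem stmt13 {d : ℕ} (hd : 1 ≤ d) (ε : ℝ) (hε : 0 < ε)
    (Ω : Set (Fin d → ℝ)) (hΩo : IsOpen Ω) (hΩb : Bornology.IsBounded Ω) :
    -- linearity
    (∀ (a b : ℝ) (u v : (Fin d → ℝ) → ℝ),
      unfoldR ε Ω (fun x => a * u x + b * v x)
        = fun x y => a * unfoldR ε Ω u x y + b * unfoldR ε Ω v x y) ∧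
    -- isometry: `‖U_ε u‖_{L²(ℝ^d×Y)} = ‖u‖_{L²(Ω)}`
    (∀ u : (Fin d → ℝ) → ℝ, Measurable u →
      (∫⁻ x, ∫⁻ y in Ybox d, ENNReal.ofReal ((unfoldR ε Ω u x y) ^ 2))
        = ∫⁻ x in Ω, ENNReal.ofReal ((u x) ^ 2)) ∧
    -- product rule
    (∀ u v : (Fin d → ℝ) → ℝ,
      unfoldR ε Ω (fun x => u x * v x)
        = fun x y => unfoldR ε Ω u x y * unfoldR ε Ω v x y) :=
  stmt13_general ε hε Ω hΩo
end
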